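/- Theorem 2.2: if a, A ∈ K with Re(conj(a)·A) > 0 and x, y, z ∈ X satisfy Re(Ay − x, x − ay | z) ≥ 0, then ‖x|z‖‖y|z‖ ≤ (1/2) · Re[(conj(A) + conj(a))(x,y|z)] / √(Re(conj(a)A)) ≤ (1/2) · |A + a| · |(x,y|z)| / √(Re(conj(a)A)). -/
import Mathlib


open RCLike

/-- A 2-inner product space over `𝕜 = ℝ` or `ℂ`. -/
structure TwoIP (𝕜 : Type) (X : Type) [RCLike 𝕜] [AddCommGroup X] [Module 𝕜 X] where
  ip : X → X → X → 𝕜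
  re_nonneg : ∀ x z : X, 0 ≤ re (ip x x z)
  im_zero : ∀ x z : X, im (ip x x z) = 0
  eq_zero_iff : ∀ x z : X, ip x x z = 0 ↔ ¬ LinearIndependent 𝕜 ![x, z]
  swap : ∀ x z : X, ip x x z = ip z z x
  conj_symm : ∀ x y z : X, ip x y z = (starRingEnd 𝕜) (ip y x z)
  smul_left : ∀ (α : 𝕜) (x y z : X), ip (α • x) y z = α * ip x y z
  add_left : ∀ x x' y z : X, ip (x + x') y z = ip x y z + ip x' y z

theorem TwoIP.sub_left {𝕜 X : Type} [RCLike 𝕜] [AddCommGroup X] [Module 𝕜 X]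
    (T : TwoIP 𝕜 X) (u v y z : X) : T.ip (u - v) y z = T.ip u y z - T.ip v y z := by
  have : u - v = u + (-1 : 𝕜) • v := by rw [neg_one_smul]; abel
  rw [this, T.add_left, T.smul_left]; ring

theorem TwoIP.add_right {𝕜 X : Type} [RCLike 𝕜] [AddCommGroup X] [Module 𝕜 X]
    (T : TwoIP 𝕜 X) (u v y z : X) : T.ip y (u + v) z = T.ip y u z + T.ip y v z := by
  rw [T.conj_symm y u, T.conj_symm y v, T.conj_symm y (u+v), T.add_left, map_add]

theorem TwoIP.smul_right {𝕜 X : Type} [RCLike 𝕜] [AddCommGroup X] [Module 𝕜 X]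
    (T : TwoIP 𝕜 X) (α : 𝕜) (u y z : X) :
    T.ip y (α • u) z = (starRingEnd 𝕜) α * T.ip y u z := by
  rw [T.conj_symm y (α • u), T.smul_left, map_mul, ← T.conj_symm]

theorem TwoIP.sub_right {𝕜 X : Type} [RCLike 𝕜] [AddCommGroup X] [Module 𝕜 X]
    (T : TwoIP 𝕜 X) (u v y z : X) : T.ip y (u - v) z = T.ip y u z - T.ip y v z := by
  have : u - v = u + (-1 : 𝕜) • v := by rw [neg_one_smul]; abel
  rw [this, T.add_right, T.smul_right]; simp; ring

theorem stmt {𝕜 X : Type} [RCLike 𝕜] [AddCommGroup X] [Module 𝕜 X]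
    (T : TwoIP 𝕜 X) (hdim : 1 < Module.rank 𝕜 X) (x y z : X) (a A : 𝕜)
    (ha : 0 < re ((starRingEnd 𝕜) a * A))
    (h : 0 ≤ re (T.ip (A • y - x) (x - a • y) z)) :
    Real.sqrt (re (T.ip x x z)) * Real.sqrt (re (T.ip y y z))
      ≤ (1/2) * re (((starRingEnd 𝕜) A + (starRingEnd 𝕜) a) * T.ip x y z)
          / Real.sqrt (re ((starRingEnd 𝕜) a * A)) ∧
    (1/2) * re (((starRingEnd 𝕜) A + (starRingEnd 𝕜) a) * T.ip x y z)
        / Real.sqrt (re ((starRingEnd 𝕜) a * A))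
      ≤ (1/2) * ‖A + a‖ * ‖T.ip x y z‖ / Real.sqrt (re ((starRingEnd 𝕜) a * A)) := by
  set w := T.ip x y z with hw
  set p := re (T.ip x x z) with hp
  set q := re (T.ip y y z) with hq
  set c := re ((starRingEnd 𝕜) a * A) with hc
  set R := re (((starRingEnd 𝕜) A + (starRingEnd 𝕜) a) * w) with hR
  have hp0 : 0 ≤ p := T.re_nonneg x z
  have hq0 : 0 ≤ q := T.re_nonneg y z
  have hyy : T.ip y y z = ((q : ℝ) : 𝕜) := by
    apply RCLike.ext <;> simp [← hq, T.im_zero]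
  have hyx : T.ip y x z = (starRingEnd 𝕜) w := by
    rw [hw, T.conj_symm y x z]
  -- expand h
  have hexp : T.ip (A • y - x) (x - a • y) z
      = A * (starRingEnd 𝕜) w - A * (starRingEnd 𝕜) a * ((q : ℝ) : 𝕜)
        - T.ip x x z + (starRingEnd 𝕜) a * w := by
    rw [T.sub_left, T.sub_right, T.sub_right, T.smul_left, T.smul_left, T.smul_right,
      T.smul_right, hyy, hyx, ← hw]
    ring
  have key : p + c * q ≤ R := by
    have h1 : re (T.ip (A • y - x) (x - a • y) z)
        = re (A * (starRingEnd 𝕜) w) - c * q - p + re ((starRingEnd 𝕜) a * w) := by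
      rw [hexp]
      simp only [map_sub, map_add]
      have hmid : re (A * (starRingEnd 𝕜) a * ((q : ℝ) : 𝕜)) = c * q := by
        rw [mul_comm (A * (starRingEnd 𝕜) a), RCLike.re_ofReal_mul, hc,
          mul_comm ((starRingEnd 𝕜) a) A]
        ring
      rw [hmid]
    have h2 : re (A * (starRingEnd 𝕜) w) = re ((starRingEnd 𝕜) A * w) := by
      rw [← RCLike.conj_re (A * (starRingEnd 𝕜) w), map_mul, RCLike.conj_conj]
    have h3 : R = re (A * (starRingEnd 𝕜) w) + re ((starRingEnd 𝕜) a * w) := by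
      rw [hR, add_mul, map_add, h2]
    rw [h1] at h; linarith [h, h3.ge]
  have hcpos : 0 < c := ha
  have hsc : 0 < Real.sqrt c := Real.sqrt_pos.mpr hcpos
  constructor
  · rw [le_div_iff₀ hsc]
    have hsq : Real.sqrt p * Real.sqrt q * Real.sqrt c * 2 ≤ p + c * q := by
      nlinarith [sq_nonneg (Real.sqrt p - Real.sqrt c * Real.sqrt q),
        Real.sq_sqrt hp0, Real.sq_sqrt hq0, Real.sq_sqrt hcpos.le,
        Real.sqrt_nonneg p, Real.sqrt_nonneg q, Real.sqrt_nonneg c]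
    linarith
  · rw [div_le_div_iff₀ hsc hsc]
    have h4 : R ≤ ‖A + a‖ * ‖w‖ := by
      calc R ≤ ‖((starRingEnd 𝕜) A + (starRingEnd 𝕜) a) * w‖ := RCLike.re_le_norm _
        _ = ‖A + a‖ * ‖w‖ := by rw [norm_mul, ← map_add, RCLike.norm_conj]
    nlinarith [hsc]
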